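/- For every V ∈ 𝒱 with finite M₂, every y ∈ 𝒴₀, and every T ∈ 𝒯, setting F := ∂_T y: |Σa(y;T) − Σa(y_F;T)| ≤ (1/Ω₀) M₂ max_{x ∈ T∩ℒ} |D²y(x)|, where Σa(y_F;T) = (1/Ω₀) Σ_{j=1}^6 ∂_j V(F𝐚) ⊗ a_j and |·| is the Frobenius norm. -/

import Mathlib

open Real
open scoped BigOperators Classical ENNReal

noncomputable section

namespace AC

/-- The plane `ℝ²` with the Euclidean norm. -/
abbrev E2 := EuclideanSpace ℝ (Fin 2)

/-- `2 × 2` real matrices. -/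
abbrev Mat2 := Matrix (Fin 2) (Fin 2) ℝ

def toE2 (v : Fin 2 → ℝ) : E2 := WithLp.toLp 2 v

/-- The lattice directions `a_j = Q6^(j-1) a_1`, `Q6` the rotation by `π/3`. -/
def avec (j : ℤ) : E2 :=
  toE2 ![Real.cos (((j : ℝ) - 1) * (Real.pi / 3)), Real.sin (((j : ℝ) - 1) * (Real.pi / 3))]

/-- The volume `Ω₀ = √3/2` of a primitive cell. -/
def Om0 : ℝ := Real.sqrt 3 / 2

/-- `𝐚 = (a_1, …, a_6)`. -/
def aFam : Fin 6 → E2 := fun j => avec ((j : ℕ) + 1)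

/-- Matrix-vector multiplication on `E2`. -/
def mvec (F : Mat2) (v : E2) : E2 := toE2 fun i => ∑ k, F i k * v k

/-- `F𝐚 = (F a_1, …, F a_6)`. -/
def Famat (F : Mat2) : Fin 6 → E2 := fun j => mvec F (aFam j)

/-- Lattice coordinates (w.r.t. the basis `a_1, a_2`) of `a_j` (indices mod 6). -/
def ed (j : ℤ) : ℤ × ℤ :=
  match (j % 6).toNat with
  | 1 => (1, 0)
  | 2 => (0, 1)
  | 3 => (-1, 1)
  | 4 => (-1, 0)
  | 5 => (0, -1)
  | _ => (1, -1)

/-- The lattice point `n₁ a₁ + n₂ a₂`; `ℒ = emb '' (ℤ × ℤ)`. -/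
def emb (n : ℤ × ℤ) : E2 := (n.1 : ℝ) • avec 1 + (n.2 : ℝ) • avec 2

/-- Forward finite difference `D_j v(x) = v(x + a_j) - v(x)` in lattice coordinates. -/
def Dd (j : ℤ) (v : ℤ × ℤ → E2) (n : ℤ × ℤ) : E2 := v (n + ed j) - v n

/-- `Dv(x) = (D_1 v(x), …, D_6 v(x))`. -/
def Dfam (y : ℤ × ℤ → E2) (n : ℤ × ℤ) : Fin 6 → E2 := fun j => Dd ((j : ℕ) + 1) y n

/-- Euclidean dot product. -/
def dotE (v w : E2) : ℝ := ∑ i, v i * w i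

/-- Frobenius inner product `A : B`. -/
def frobI (A B : Mat2) : ℝ := ∑ i, ∑ k, A i k * B i k

/-- Frobenius norm. -/
def frobN (A : Mat2) : ℝ := Real.sqrt (∑ i, ∑ k, (A i k) ^ 2)

/-- Outer product `v ⊗ w`. -/
def outer (v w : E2) : Mat2 := fun i k => v i * w k

/-- The element of `(ℝ²)⁶` with `k`-th standard basis vector in slot `j` and `0` elsewhere. -/
def unitv (j : Fin 6) (k : Fin 2) : Fin 6 → E2 := fun i => if i = j then toE2 (Pi.single k 1) else 0

/-- Partial gradient `∂_j V(g) ∈ ℝ²` of `V` with respect to its `j`-th argument. -/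
def pd (V : (Fin 6 → E2) → ℝ) (j : Fin 6) (g : Fin 6 → E2) : E2 :=
  toE2 fun k => deriv (fun t : ℝ => V (g + t • unitv j k)) 0

/-- Second partial derivative `∂_{ij} V(g) ∈ ℝ^{2×2}`. -/
def pd2 (V : (Fin 6 → E2) → ℝ) (i j : Fin 6) (g : Fin 6 → E2) : Mat2 :=
  fun k l => deriv (fun t : ℝ => pd V j (g + t • unitv i k) l) 0

/-- Third partial derivative `∂_{ijk} V(g)`. -/
def pd3 (V : (Fin 6 → E2) → ℝ) (i j k : Fin 6) (g : Fin 6 → E2) : Fin 2 → Fin 2 → Fin 2 → ℝ :=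
  fun p q r => deriv (fun t : ℝ => pd2 V j k (g + t • unitv i p) q r) 0

/-- Operator norm of a matrix viewed as a bilinear form on `ℝ²`. -/
def matOpNorm (A : Mat2) : ℝ :=
  sSup {r : ℝ | ∃ h1 h2 : E2, ‖h1‖ = 1 ∧ ‖h2‖ = 1 ∧ r = ∑ k, ∑ l, A k l * h1 k * h2 l}

/-- Norm of a trilinear form on `ℝ²`. -/
def t3norm (B : Fin 2 → Fin 2 → Fin 2 → ℝ) : ℝ :=
  sSup {r : ℝ | ∃ h1 h2 h3 : E2, ‖h1‖ = 1 ∧ ‖h2‖ = 1 ∧ ‖h3‖ = 1 ∧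
    r = ∑ p, ∑ q, ∑ s, B p q s * h1 p * h2 q * h3 s}

/-- `M₂ = Σ_{i,j} sup_g ‖∂_{ij}V(g)‖`. -/
def M2 (V : (Fin 6 → E2) → ℝ) : ℝ :=
  ∑ i : Fin 6, ∑ j : Fin 6, ⨆ g : Fin 6 → E2, matOpNorm (pd2 V i j g)

/-- `M₃ = Σ_{i,j,k} sup_g ‖∂_{ijk}V(g)‖`. -/
def M3 (V : (Fin 6 → E2) → ℝ) : ℝ :=
  ∑ i : Fin 6, ∑ j : Fin 6, ∑ k : Fin 6, ⨆ g : Fin 6 → E2, t3norm (pd3 V i j k g)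

/-- Finiteness of `M₂`. -/
def M2fin (V : (Fin 6 → E2) → ℝ) : Prop :=
  ∀ i j : Fin 6, BddAbove (Set.range fun g : Fin 6 → E2 => matOpNorm (pd2 V i j g))

/-- Finiteness of `M₃`. -/
def M3fin (V : (Fin 6 → E2) → ℝ) : Prop :=
  ∀ i j k : Fin 6, BddAbove (Set.range fun g : Fin 6 → E2 => t3norm (pd3 V i j k g))

/-- The class `𝒱`: `C³` potentials with the point symmetry `V((-g_{j+3})_j) = V(g)`. -/
def memV (V : (Fin 6 → E2) → ℝ) : Prop :=
  ContDiff ℝ 3 V ∧ ∀ g : Fin 6 → E2, V (fun j => -g (j + 3)) = V g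

/-- Cauchy–Born stored energy `W(F) = V(F𝐚)/Ω₀`. -/
def Wf (V : (Fin 6 → E2) → ℝ) (F : Mat2) : ℝ := V (Famat F) / Om0

/-- `∂W(F) ∈ ℝ^{2×2}`. -/
def DW (V : (Fin 6 → E2) → ℝ) (F : Mat2) : Mat2 :=
  fun i k => deriv (fun t : ℝ => Wf V (F + t • Matrix.single i k 1)) 0

/-- The matrix `G` with `G b₁ = v₁`, `G b₂ = v₂` (for linearly independent `b₁, b₂`). -/
def solve2 (b1 b2 v1 v2 : E2) : Mat2 := fun i k =>
  (if k = 0 then v1 i * b2 1 - v2 i * b1 1 else v2 i * b1 0 - v1 i * b2 0) /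
    (b1 0 * b2 1 - b1 1 * b2 0)

/-- Triangles of the canonical triangulation `𝒯`: `(n, true)` is the upward triangle
with vertices `n, n+a₁, n+a₂`, and `(n, false)` the downward triangle with vertices
`n, n+a₁, n+a₆` (in lattice coordinates). -/
abbrev Tri := (ℤ × ℤ) × Bool

/-- The gradient `∂_T y` of the piecewise affine interpolant of `y` on `T`. -/
def triGrad (y : ℤ × ℤ → E2) (T : Tri) : Mat2 :=
  if T.2 then solve2 (avec 1) (avec 2) (Dd 1 y T.1) (Dd 2 y T.1)
  else solve2 (avec 1) (avec 6) (Dd 1 y T.1) (Dd 6 y T.1)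

/-- The vertices `T ∩ ℒ` of a triangle, in lattice coordinates. -/
def triVerts (T : Tri) : Finset (ℤ × ℤ) :=
  if T.2 then {T.1, T.1 + (1, 0), T.1 + (0, 1)} else {T.1, T.1 + (1, 0), T.1 + (1, -1)}

/-- `x_{T,j}`: the unique lattice point with `x_{T,j}, x_{T,j} + a_{j+1} ∈ T`
(here `j : Fin 6` labels the direction `a_{j+1}`). -/
def xT (T : Tri) (j : Fin 6) : ℤ × ℤ :=
  T.1 + (if T.2 then
    (match (j : ℕ) with
     | 0 => ((0 : ℤ), (0 : ℤ)) | 1 => (0, 0) | 2 => (1, 0) | 3 => (1, 0) | 4 => (0, 1) | _ => (0, 1))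
  else
    (match (j : ℕ) with
     | 0 => ((0 : ℤ), (0 : ℤ)) | 1 => (1, -1) | 2 => (1, -1) | 3 => (1, 0) | 4 => (1, 0) | _ => (0, 0)))

/-- The neighbouring triangle `T_j` of `T` sharing the edge with direction `a_{j+1}`. -/
def nbr (T : Tri) (j : Fin 6) : Tri :=
  if T.2 then
    (T.1 + (match (j : ℕ) % 3 with | 0 => ((0 : ℤ), (0 : ℤ)) | 1 => (-1, 1) | _ => (0, 1)), false)
  else
    (T.1 + (match (j : ℕ) % 3 with | 0 => ((0 : ℤ), (0 : ℤ)) | 1 => (1, -1) | _ => (0, -1)), true)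

/-- The triangle `T_{x,j} = conv{x, x + a_j, x + a_{j+1}}` (index `j` mod 6). -/
def Txj (x : ℤ × ℤ) (j : ℤ) : Tri :=
  match (j % 6).toNat with
  | 1 => (x, true)
  | 2 => (x + (-1, 1), false)
  | 3 => (x + (-1, 0), true)
  | 4 => (x + (-1, 0), false)
  | 5 => (x + (0, -1), true)
  | _ => (x, false)

/-- The Cauchy–Born site potential `V^c(g) = (Ω₀/6) Σ_j W(∂_{T_{x,j}} y)` as a function
of the six differences `g = Dy(x)`. -/
def Vc (V : (Fin 6 → E2) → ℝ) (g : Fin 6 → E2) : ℝ :=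
  Om0 / 6 * ∑ j : Fin 6, Wf V (solve2 (avec ((j : ℕ) + 1)) (avec ((j : ℕ) + 2)) (g j) (g (j + 1)))

/-- The atomistic stress `Σa(y;T)`. -/
def Sa (V : (Fin 6 → E2) → ℝ) (y : ℤ × ℤ → E2) (T : Tri) : Mat2 :=
  Om0⁻¹ • ∑ j : Fin 6, outer (pd V j (Dfam y (xT T j))) (aFam j)

/-- The continuum stress `Σc¹(y;T) = ∂W(∂_T y)`. -/
def Sc1 (V : (Fin 6 → E2) → ℝ) (y : ℤ × ℤ → E2) (T : Tri) : Mat2 := DW V (triGrad y T)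

/-- The continuum stress `Σc²(y;T)`. -/
def Sc2 (V : (Fin 6 → E2) → ℝ) (y : ℤ × ℤ → E2) (T : Tri) : Mat2 :=
  Om0⁻¹ • ∑ j : Fin 6, (2 : ℝ)⁻¹ •
    outer (pd V j (Famat (triGrad y T)) + pd V j (Famat (triGrad y (nbr T j)))) (aFam j)

/-- The continuum stress `Σc³(y;T)`. -/
def Sc3 (V : (Fin 6 → E2) → ℝ) (y : ℤ × ℤ → E2) (T : Tri) : Mat2 :=
  Om0⁻¹ • ∑ j : Fin 6, outer (pd (Vc V) j (Dfam y (xT T j))) (aFam j)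

/-- The interface region `ℐ` determined by the atomistic region `𝒜`. -/
def interf (A : Set (ℤ × ℤ)) : Set (ℤ × ℤ) :=
  {x | x ∉ A ∧ ∃ j : Fin 6, x + ed ((j : ℕ) + 1) ∈ A}

/-- The continuum region `𝒞 = ℒ ∖ (𝒜 ∪ ℐ)`. -/
def contR (A : Set (ℤ × ℤ)) : Set (ℤ × ℤ) := {x | x ∉ A ∧ x ∉ interf A}

/-- The reconstructed interface potential `V^i(g) = V((Σ_i C_{j,i} g_i)_j)`. -/
def Vi (V : (Fin 6 → E2) → ℝ) (Cp : Fin 6 → Fin 6 → ℝ) (g : Fin 6 → E2) : ℝ :=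
  V fun j => ∑ i : Fin 6, Cp j i • g i

/-- The hybrid site potential `V^ac_x`. -/
def Vac (V : (Fin 6 → E2) → ℝ) (C : ℤ × ℤ → Fin 6 → Fin 6 → ℝ) (A : Set (ℤ × ℤ))
    (x : ℤ × ℤ) : (Fin 6 → E2) → ℝ :=
  if x ∈ A then V else if x ∈ interf A then Vi V (C x) else Vc V

/-- First variation `⟨δE_a(y), u⟩` of the atomistic energy. -/
def dEa (V : (Fin 6 → E2) → ℝ) (y u : ℤ × ℤ → E2) : ℝ :=
  ∑ᶠ n : ℤ × ℤ, ∑ j : Fin 6, dotE (pd V j (Dfam y n)) (Dfam u n j)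

/-- First variation `⟨δE_c(y), u⟩` of the Cauchy–Born energy. -/
def dEc (V : (Fin 6 → E2) → ℝ) (y u : ℤ × ℤ → E2) : ℝ :=
  ∑ᶠ T : Tri, Om0 / 2 * frobI (DW V (triGrad y T)) (triGrad u T)

/-- First variation `⟨δE_ac(y), u⟩` of the a/c coupling energy. -/
def dEac (V : (Fin 6 → E2) → ℝ) (C : ℤ × ℤ → Fin 6 → Fin 6 → ℝ) (A : Set (ℤ × ℤ))
    (y u : ℤ × ℤ → E2) : ℝ :=
  ∑ᶠ n : ℤ × ℤ, ∑ i : Fin 6, dotE (pd (Vac V C A n) i (Dfam y n)) (Dfam u n i)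

/-- The a/c stress `Σac(y;T)`. -/
def Sac (V : (Fin 6 → E2) → ℝ) (C : ℤ × ℤ → Fin 6 → Fin 6 → ℝ) (A : Set (ℤ × ℤ))
    (y : ℤ × ℤ → E2) (T : Tri) : Mat2 :=
  Om0⁻¹ • ∑ j : Fin 6, outer (pd (Vac V C A (xT T j)) j (Dfam y (xT T j))) (aFam j)

/-- `u ∈ 𝒰₀`: finitely supported displacement. -/
def FinSupp (u : ℤ × ℤ → E2) : Prop := (Function.support u).Finite

/-- `y ∈ 𝒴₀`: deformation with `y - id` finitely supported. -/
def inY0 (y : ℤ × ℤ → E2) : Prop := (Function.support fun n => y n - emb n).Finite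

/-- The homogeneous deformation `y_F(x) = Fx`. -/
def yhom (F : Mat2) : ℤ × ℤ → E2 := fun n => mvec F (emb n)

/-- One-sidedness: `C_{j,i} = 0` unless `i ∈ {j-1, j, j+1}` (mod 6). -/
def oneSided (Cp : Fin 6 → Fin 6 → ℝ) : Prop :=
  ∀ j i : Fin 6, i ≠ j - 1 → i ≠ j → i ≠ j + 1 → Cp j i = 0

/-- Local energy consistency: `C_{j,j-1} = C_{j,j+1} = 1 - C_{j,j}`. -/
def eCons (Cp : Fin 6 → Fin 6 → ℝ) : Prop :=
  ∀ j : Fin 6, Cp j (j - 1) = 1 - Cp j j ∧ Cp j (j + 1) = 1 - Cp j j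

/-- The coefficients corresponding to the atomistic site potential (`C_{x,j} = 1`). -/
def atomC : Fin 6 → Fin 6 → ℝ := fun j i => if i = j then 1 else 0

/-- The coefficients corresponding to the Cauchy–Born site potential (`C_{x,j} = 2/3`). -/
def cbC : Fin 6 → Fin 6 → ℝ := fun j i =>
  if i = j then 2 / 3 else if i = j - 1 ∨ i = j + 1 then 1 / 3 else 0

/-- The negative force `-f_ac(x; y_F) = Σ_{j,i} (C_{x-a_i,j,i} - C_{x,j,i}) ∂_j V(F𝐚)`. -/
def forceSum (C : ℤ × ℤ → Fin 6 → Fin 6 → ℝ) (V : (Fin 6 → E2) → ℝ) (F : Mat2)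
    (x : ℤ × ℤ) : E2 :=
  ∑ j : Fin 6, ∑ i : Fin 6, (C (x - ed ((i : ℕ) + 1)) j i - C x j i) • pd V j (Famat F)

/-- The force consistency condition (5.2) on the coefficients. -/
def fCons (C : ℤ × ℤ → Fin 6 → Fin 6 → ℝ) : Prop :=
  ∀ j : Fin 6, (j : ℕ) < 3 → ∀ x : ℤ × ℤ,
    ∑ i : Fin 6, (C (x - ed ((i : ℕ) + 1)) j i - C (x - ed ((i : ℕ) + 1)) (j + 3) i
      - C x j i + C x (j + 3) i) = 0

/-- `|D²y(x)| = max_{i,j} |D_i D_j y(x)|`. -/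
def D2n (y : ℤ × ℤ → E2) (n : ℤ × ℤ) : ℝ :=
  ⨆ i : Fin 6, ⨆ j : Fin 6, ‖Dd ((i : ℕ) + 1) (Dd ((j : ℕ) + 1) y) n‖

/-- `|D³y(x)| = max_{i,j,k} |D_i D_j D_k y(x)|`. -/
def D3n (y : ℤ × ℤ → E2) (n : ℤ × ℤ) : ℝ :=
  ⨆ i : Fin 6, ⨆ j : Fin 6, ⨆ k : Fin 6,
    ‖Dd ((i : ℕ) + 1) (Dd ((j : ℕ) + 1) (Dd ((k : ℕ) + 1) y)) n‖

/-- `ℓ^p` norm of a lattice function over a subset `S ⊆ ℒ`. -/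
def lpNormS (p : ℝ≥0∞) (f : ℤ × ℤ → ℝ) (S : Set (ℤ × ℤ)) : ℝ :=
  if p = ⊤ then ⨆ x : S, |f x| else (∑ᶠ x ∈ S, |f x| ^ p.toReal) ^ (1 / p.toReal)

/-- `‖∂u‖_{L^q}` for the piecewise affine interpolant. -/
def gradLp (q : ℝ≥0∞) (u : ℤ × ℤ → E2) : ℝ :=
  if q = ⊤ then ⨆ T : Tri, frobN (triGrad u T)
  else (∑ᶠ T : Tri, Om0 / 2 * frobN (triGrad u T) ^ q.toReal) ^ (1 / q.toReal)

/-- `𝒯_𝒜`: triangles with `T ∩ (ℐ ∪ 𝒞) = ∅`. -/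
def TA (A : Set (ℤ × ℤ)) : Set Tri := {T | ∀ n ∈ triVerts T, n ∉ interf A ∧ n ∉ contR A}

/-- `𝒯_𝒞`: triangles with `T ∩ (ℐ ∪ 𝒜) = ∅`. -/
def TC (A : Set (ℤ × ℤ)) : Set Tri := {T | ∀ n ∈ triVerts T, n ∉ interf A ∧ n ∉ A}

/-- `𝒯_ℐ = 𝒯 ∖ (𝒯_𝒜 ∪ 𝒯_𝒞)`. -/
def TI (A : Set (ℤ × ℤ)) : Set Tri := {T | T ∉ TA A ∧ T ∉ TC A}

/-- The midpoint of the edge `(x, x + a_j)`. -/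
def edgeMid (x : ℤ × ℤ) (j : ℤ) : E2 := emb x + (2 : ℝ)⁻¹ • avec j

/-- The edge `(x, x+a_j)` belongs to `𝔉_𝒜` (it lies in a triangle of `𝒯_𝒜`). -/
def edgeInA (A : Set (ℤ × ℤ)) (x : ℤ × ℤ) (j : ℤ) : Prop :=
  Txj x j ∈ TA A ∨ Txj x (j - 1) ∈ TA A

/-- The edge `(x, x+a_j)` belongs to `𝔉_𝒞`. -/
def edgeInC (A : Set (ℤ × ℤ)) (x : ℤ × ℤ) (j : ℤ) : Prop :=
  Txj x j ∈ TC A ∨ Txj x (j - 1) ∈ TC A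

/-- Rotation by `π/2`. -/
def Jmat : Mat2 := !![0, -1; 1, 0]

/-- Midpoint continuity of a piecewise affine field: membership in `N1(𝒯)²`. -/
def midCont (ψ : Tri → E2 → E2) : Prop :=
  ∀ (x : ℤ × ℤ) (j : ℤ), ψ (Txj x j) (edgeMid x j) = ψ (Txj x (j - 1)) (edgeMid x j)

/-- `ψ` is piecewise affine with Jacobian `G T` on each triangle `T`. -/
def affWith (ψ : Tri → E2 → E2) (G : Tri → Mat2) : Prop :=
  ∀ (T : Tri) (z w : E2), ψ T z - ψ T w = mvec (G T) (z - w)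

/-- Assumption 4.1: every interface atom has exactly two interface neighbours and
at least one continuum neighbour. -/
def InterfaceOK (A : Set (ℤ × ℤ)) : Prop :=
  ∀ x ∈ interf A,
    ({j : Fin 6 | x + ed ((j : ℕ) + 1) ∈ interf A}).ncard = 2 ∧
    ∃ j : Fin 6, x + ed ((j : ℕ) + 1) ∈ contR A

/-- The patch test: local energy consistency and local force consistency for all `V ∈ 𝒱`. -/
def PatchTest (C : ℤ × ℤ → Fin 6 → Fin 6 → ℝ) (A : Set (ℤ × ℤ)) : Prop :=
  (∀ V, memV V → ∀ F : Mat2, ∀ x ∈ interf A, Vi V (C x) (Famat F) = V (Famat F)) ∧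
  (∀ V, memV V → ∀ F : Mat2, ∀ u, FinSupp u → dEac V C A (yhom F) u = 0)

/-- The closed triangle `T ⊆ ℝ²`. -/
def triSet (T : Tri) : Set E2 :=
  convexHull ℝ {emb T.1, emb (T.1 + (1, 0)), emb (T.1 + (if T.2 then ((0 : ℤ), (1 : ℤ)) else (1, -1)))}

/-- The closed edge `[x, x + a_j] ⊆ ℝ²`. -/
def edgeSeg (x : ℤ × ℤ) (j : ℤ) : Set E2 := segment ℝ (emb x) (emb (x + ed j))

/-- The atomistic region of the flat interface: `{x ∈ ℒ : x₂ < 0}`. -/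
def flatA : Set (ℤ × ℤ) := {n | emb n 1 < 0}

/-- The extended interface region `ℐ^ext = {x ∈ ℒ : dist(x, ℐ) ≤ 1}`. -/
def Iext (A : Set (ℤ × ℤ)) : Set (ℤ × ℤ) := {x | ∃ z ∈ interf A, ‖emb x - emb z‖ ≤ 1}

/-- Embedding `Fin 3 → Fin 6`. -/
def jlift (j : Fin 3) : Fin 6 := ⟨(j : ℕ), by omega⟩

end AC

/-!
Put `F = ∂_T y`. The affine interpolant is exact at the vertices of `T`, so `F a_i = D_i y(x_{T,i})`,
while `D y_F ≡ F𝐚`. The two stresses therefore evaluate `∂_j V` at arguments whose `i`-th entries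
differ by `D_i y(x_{T,j}) - D_i y(x_{T,i})`; any two vertices of `T` are lattice neighbours, so this
is a second difference `D_k D_i y` at a vertex of `T`. By the mean value theorem along a segment,
`|∂_j V(g) - ∂_j V(h)| ≤ Σ_i sup ‖∂_{ij} V‖ |g_i - h_i|`, and summing over `j` with `|a_j| = 1`
gives the estimate.
-/

lemma norm_le_of_forall_unit_inner_le {E : Type*} [NormedAddCommGroup E] [InnerProductSpace ℝ E]
    [Nontrivial E] {v : E} {C : ℝ} (h : ∀ w : E, ‖w‖ = 1 → inner ℝ w v ≤ C) : ‖v‖ ≤ C := by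
  rcases eq_or_ne v 0 with rfl | hv
  · obtain ⟨w, hw⟩ := exists_norm_eq E zero_le_one
    simpa using h w hw
  · have := h (‖v‖⁻¹ • v) (norm_smul_inv_norm hv)
    rwa [real_inner_smul_left, real_inner_self_eq_norm_sq, sq,
      inv_mul_cancel_left₀ (norm_ne_zero_iff.2 hv)] at this

lemma hasDerivAt_comp_add_smul {E F : Type*} [NormedAddCommGroup E] [NormedSpace ℝ E]
    [NormedAddCommGroup F] [NormedSpace ℝ F] {f : E → F} {g h : E} {t : ℝ}
    (hf : DifferentiableAt ℝ f (g + t • h)) :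
    HasDerivAt (fun s : ℝ => f (g + s • h)) (fderiv ℝ f (g + t • h) h) t :=
  hf.hasFDerivAt.comp_hasDerivAt t (by simpa using ((hasDerivAt_id t).smul_const h).const_add g)

namespace AC

section Lattice

lemma avec_succ (j : ℤ) : avec (j + 1) = avec j - avec (j - 1) := by
  refine eq_sub_of_add_eq ?_
  have hθ : ∀ s : ℤ, (((j + s : ℤ) : ℝ) - 1) * (π / 3) = ((j : ℝ) - 1) * (π / 3) + s * (π / 3) :=
    fun s => by push_cast; ring
  rw [sub_eq_add_neg j 1]
  simp only [avec, hθ 1, hθ (-1)]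
  ext k
  fin_cases k <;> simp [toE2, cos_add, sin_add, cos_pi_div_three, sin_pi_div_three] <;> ring

lemma emb_ed (j : Fin 6) : emb (ed ((j : ℕ) + 1)) = aFam j := by
  have h3 := avec_succ 2
  have h4 := avec_succ 3
  have h5 := avec_succ 4
  have h6 := avec_succ 5
  norm_num at h3 h4 h5 h6
  fin_cases j <;> simp [emb, ed, aFam, h3, h4, h5, h6] <;> abel

lemma avec_one : avec 1 = toE2 ![1, 0] := by simp [avec]

lemma avec_two : avec 2 = toE2 ![1 / 2, √3 / 2] := by
  norm_num [avec, cos_pi_div_three, sin_pi_div_three]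

lemma avec_six : avec 6 = toE2 ![1 / 2, -(√3 / 2)] := by
  have h : emb (1, -1) = avec 6 := emb_ed 5
  rw [← h, emb, avec_one, avec_two]
  ext k
  fin_cases k <;> norm_num [toE2]

lemma norm_avec (j : ℤ) : ‖avec j‖ = 1 := by
  simp [avec, toE2, EuclideanSpace.norm_eq, Fin.sum_univ_two, Real.cos_sq_add_sin_sq]

lemma emb_add (p q : ℤ × ℤ) : emb (p + q) = emb p + emb q := by
  simp only [emb, Prod.fst_add, Prod.snd_add]
  push_cast
  module

lemma mvec_zero (F : Mat2) : mvec F 0 = 0 := map_zero (Matrix.toLpLin 2 2 F)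

lemma mvec_sub (F : Mat2) (u v : E2) : mvec F (u - v) = mvec F u - mvec F v :=
  map_sub (Matrix.toLpLin 2 2 F) u v

lemma mvec_solve2_left {b₁ b₂ : E2} (v₁ v₂ : E2) (h : b₁ 0 * b₂ 1 - b₁ 1 * b₂ 0 ≠ 0) :
    mvec (solve2 b₁ b₂ v₁ v₂) b₁ = v₁ := by
  ext i
  simp only [mvec, solve2, toE2, PiLp.toLp_apply, Fin.sum_univ_two, Fin.isValue, if_true,
    one_ne_zero, if_false]
  rw [div_mul_eq_mul_div, div_mul_eq_mul_div, ← add_div, div_eq_iff h]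
  ring

lemma mvec_solve2_right {b₁ b₂ : E2} (v₁ v₂ : E2) (h : b₁ 0 * b₂ 1 - b₁ 1 * b₂ 0 ≠ 0) :
    mvec (solve2 b₁ b₂ v₁ v₂) b₂ = v₂ := by
  ext i
  simp only [mvec, solve2, toE2, PiLp.toLp_apply, Fin.sum_univ_two, Fin.isValue, if_true,
    one_ne_zero, if_false]
  rw [div_mul_eq_mul_div, div_mul_eq_mul_div, ← add_div, div_eq_iff h]
  ring

lemma dfam_yhom (F : Mat2) (n : ℤ × ℤ) : Dfam (yhom F) n = Famat F := by
  funext j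
  rw [Dfam, Dd, yhom, yhom, ← mvec_sub, emb_add, add_sub_cancel_left, emb_ed, Famat]

end Lattice

section Triangle

lemma mvec_triGrad_emb_sub (y : ℤ × ℤ → E2) (T : Tri) {p : ℤ × ℤ} (hp : p ∈ triVerts T) :
    mvec (triGrad y T) (emb p - emb T.1) = y p - y T.1 := by
  obtain ⟨x, b⟩ := T
  have h12 : avec 1 0 * avec 2 1 - avec 1 1 * avec 2 0 ≠ 0 := by simp [avec_one, avec_two, toE2]
  have h16 : avec 1 0 * avec 6 1 - avec 1 1 * avec 6 0 ≠ 0 := by simp [avec_one, avec_six, toE2]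
  have e1 : emb (1, 0) = avec 1 := emb_ed 0
  have e2 : emb (0, 1) = avec 2 := emb_ed 1
  have e6 : emb (1, -1) = avec 6 := emb_ed 5
  cases b <;> simp only [triVerts, Bool.false_eq_true, if_true, if_false, Finset.mem_insert,
    Finset.mem_singleton] at hp <;> rcases hp with rfl | rfl | rfl <;>
    simp only [sub_self, mvec_zero, emb_add, add_sub_cancel_left, triGrad, if_true, if_false,
      Bool.false_eq_true, e1, e2, e6]
  · exact mvec_solve2_left _ _ h16
  · exact mvec_solve2_right _ _ h16
  · exact mvec_solve2_left _ _ h12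
  · exact mvec_solve2_right _ _ h12

lemma xT_mem_triVerts (T : Tri) (j : Fin 6) : xT T j ∈ triVerts T := by
  obtain ⟨x, b⟩ := T
  cases b <;> fin_cases j <;> simp [xT, triVerts]

lemma xT_add_ed_mem_triVerts (T : Tri) (j : Fin 6) :
    xT T j + ed ((j : ℕ) + 1) ∈ triVerts T := by
  obtain ⟨x, b⟩ := T
  cases b <;> fin_cases j <;> simp [xT, triVerts, ed, add_assoc]

lemma famat_triGrad (y : ℤ × ℤ → E2) (T : Tri) (j : Fin 6) :
    Famat (triGrad y T) j = Dd ((j : ℕ) + 1) y (xT T j) := by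
  have hedge : aFam j =
      (emb (xT T j + ed ((j : ℕ) + 1)) - emb T.1) - (emb (xT T j) - emb T.1) := by
    rw [emb_add, emb_ed]; abel
  rw [Famat, hedge, mvec_sub, mvec_triGrad_emb_sub y T (xT_add_ed_mem_triVerts T j),
    mvec_triGrad_emb_sub y T (xT_mem_triVerts T j), Dd]
  abel

lemma triVerts_adjacent {T : Tri} {p q : ℤ × ℤ} (hp : p ∈ triVerts T) (hq : q ∈ triVerts T) :
    p = q ∨ ∃ k : Fin 6, q - p = ed ((k : ℕ) + 1) := by
  obtain ⟨x, b⟩ := T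
  cases b <;> simp only [triVerts, Bool.false_eq_true, if_true, if_false, Finset.mem_insert,
    Finset.mem_singleton] at hp hq <;> rcases hp with rfl | rfl | rfl <;>
    rcases hq with rfl | rfl | rfl <;>
    simp only [add_sub_add_left_eq_sub, sub_self, add_sub_cancel_left, sub_add_cancel_left,
      add_right_inj, add_eq_left, left_eq_add] <;> decide

lemma norm_Dd_Dd_le_D2n (y : ℤ × ℤ → E2) (i k : Fin 6) (p : ℤ × ℤ) :
    ‖Dd ((k : ℕ) + 1) (Dd ((i : ℕ) + 1) y) p‖ ≤ D2n y p :=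
  le_ciSup_of_le (Finite.bddAbove_range _) k
    (le_ciSup (Finite.bddAbove_range fun j : Fin 6 => ‖Dd ((k : ℕ) + 1) (Dd ((j : ℕ) + 1) y) p‖) i)

lemma D2n_nonneg (y : ℤ × ℤ → E2) (p : ℤ × ℤ) : 0 ≤ D2n y p :=
  (norm_nonneg _).trans (norm_Dd_Dd_le_D2n y 0 0 p)

lemma D2n_le_iSup_triVerts (y : ℤ × ℤ → E2) {T : Tri} {p : ℤ × ℤ} (hp : p ∈ triVerts T) :
    D2n y p ≤ ⨆ n ∈ triVerts T, D2n y n := by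
  refine le_ciSup₂ (f := fun n (_ : n ∈ triVerts T) => D2n y n) ?_ p hp
  refine ((triVerts T).finite_toSet.image (D2n y)).bddAbove.mono ?_
  rintro _ ⟨_, ⟨n, rfl⟩, ⟨hn, rfl⟩⟩
  exact ⟨n, hn, rfl⟩

lemma norm_Dd_sub_le_of_mem_triVerts (y : ℤ × ℤ → E2) {T : Tri} (i : Fin 6) {p q : ℤ × ℤ}
    (hp : p ∈ triVerts T) (hq : q ∈ triVerts T) :
    ‖Dd ((i : ℕ) + 1) y p - Dd ((i : ℕ) + 1) y q‖ ≤ ⨆ n ∈ triVerts T, D2n y n := by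
  rcases triVerts_adjacent hp hq with rfl | ⟨k, hk⟩
  · rw [sub_self, norm_zero]
    exact (D2n_nonneg y p).trans (D2n_le_iSup_triVerts y hp)
  · calc ‖Dd ((i : ℕ) + 1) y p - Dd ((i : ℕ) + 1) y q‖
          = ‖Dd ((k : ℕ) + 1) (Dd ((i : ℕ) + 1) y) p‖ := by
            rw [norm_sub_rev, eq_add_of_sub_eq' hk]; rfl
      _ ≤ D2n y p := norm_Dd_Dd_le_D2n y i k p
      _ ≤ ⨆ n ∈ triVerts T, D2n y n := D2n_le_iSup_triVerts y hp

lemma norm_dfam_sub_famat_triGrad_le (y : ℤ × ℤ → E2) (T : Tri) (i j : Fin 6) :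
    ‖Dfam y (xT T j) i - Famat (triGrad y T) i‖ ≤ ⨆ n ∈ triVerts T, D2n y n := by
  rw [famat_triGrad]
  exact norm_Dd_sub_le_of_mem_triVerts y i (xT_mem_triVerts T j) (xT_mem_triVerts T i)

end Triangle

section Potential

lemma unitv_eq_single (i : Fin 6) (k : Fin 2) :
    unitv i k = Pi.single i (EuclideanSpace.basisFun (Fin 2) ℝ k) := by
  funext m
  by_cases hm : m = i
  · subst hm; simp [unitv, toE2]
  · simp [unitv, hm]

lemma sum_smul_unitv (h : Fin 6 → E2) : ∑ i, ∑ k, h i k • unitv i k = h := by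
  conv_rhs => rw [← Finset.univ_sum_single h]
  refine Finset.sum_congr rfl fun i _ => ?_
  conv_rhs => rw [← (EuclideanSpace.basisFun (Fin 2) ℝ).sum_repr (h i)]
  simp [unitv_eq_single, Pi.single_add, Pi.single_smul']

lemma clm_apply_eq_sum_unitv {F : Type*} [AddCommGroup F] [Module ℝ F] [TopologicalSpace F]
    (L : (Fin 6 → E2) →L[ℝ] F) (h : Fin 6 → E2) :
    L h = ∑ i, ∑ k, h i k • L (unitv i k) := by
  conv_lhs => rw [← sum_smul_unitv h]
  simp only [map_sum, map_smul]

def bilin (A : Mat2) (v w : E2) : ℝ := ∑ k, ∑ l, A k l * v k * w l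

lemma bddAbove_bilin_unit (A : Mat2) :
    BddAbove {r : ℝ | ∃ v w : E2, ‖v‖ = 1 ∧ ‖w‖ = 1 ∧ r = bilin A v w} := by
  refine ⟨∑ k, ∑ l, |A k l|, ?_⟩
  rintro r ⟨v, w, hv, hw, rfl⟩
  refine (le_abs_self _).trans <| (Finset.abs_sum_le_sum_abs _ _).trans <|
    Finset.sum_le_sum fun k _ => (Finset.abs_sum_le_sum_abs _ _).trans <|
    Finset.sum_le_sum fun l _ => ?_
  have hvk : |v k| ≤ 1 := hv ▸ PiLp.norm_apply_le v k
  have hwl : |w l| ≤ 1 := hw ▸ PiLp.norm_apply_le w l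
  rw [abs_mul, abs_mul]
  calc |A k l| * |v k| * |w l| ≤ |A k l| * 1 * 1 := by gcongr
    _ = |A k l| := by ring

lemma bilin_le_matOpNorm (A : Mat2) {v w : E2} (hv : ‖v‖ = 1) (hw : ‖w‖ = 1) :
    bilin A v w ≤ matOpNorm A :=
  le_csSup (bddAbove_bilin_unit A) ⟨v, w, hv, hw, rfl⟩

lemma matOpNorm_nonneg (A : Mat2) : 0 ≤ matOpNorm A := by
  obtain ⟨v, hv⟩ := exists_norm_eq E2 zero_le_one
  have h₁ := bilin_le_matOpNorm A hv hv
  have h₂ := bilin_le_matOpNorm A (v := -v) (by rw [norm_neg, hv]) hv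
  have hneg : bilin A (-v) v = -bilin A v v := by
    simp only [bilin, PiLp.neg_apply, mul_neg, neg_mul, Finset.sum_neg_distrib]
  linarith

lemma bilin_le (A : Mat2) (v w : E2) : bilin A v w ≤ matOpNorm A * ‖v‖ * ‖w‖ := by
  rcases eq_or_ne v 0 with rfl | hv
  · simp [bilin]
  rcases eq_or_ne w 0 with rfl | hw
  · simp [bilin]
  have hscale : bilin A v w = ‖v‖ * ‖w‖ * bilin A (‖v‖⁻¹ • v) (‖w‖⁻¹ • w) := by
    simp only [bilin, PiLp.smul_apply, smul_eq_mul, Finset.mul_sum]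
    refine Finset.sum_congr rfl fun k _ => Finset.sum_congr rfl fun l _ => ?_
    field_simp
  calc bilin A v w = ‖v‖ * ‖w‖ * bilin A (‖v‖⁻¹ • v) (‖w‖⁻¹ • w) := hscale
    _ ≤ ‖v‖ * ‖w‖ * matOpNorm A := by
      gcongr
      exact bilin_le_matOpNorm A (norm_smul_inv_norm hv) (norm_smul_inv_norm hw)
    _ = matOpNorm A * ‖v‖ * ‖w‖ := by ring

variable {V : (Fin 6 → E2) → ℝ}

lemma pd_apply_eq_fderiv (hV : Differentiable ℝ V) (j : Fin 6) (g : Fin 6 → E2) (k : Fin 2) :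
    pd V j g k = fderiv ℝ V g (unitv j k) :=
  (hV g).lineDeriv_eq_fderiv

lemma pd2_apply_eq_fderiv_fderiv (hV : ContDiff ℝ 2 V) (i j : Fin 6) (g : Fin 6 → E2)
    (k l : Fin 2) : pd2 V i j g k l = fderiv ℝ (fderiv ℝ V) g (unitv i k) (unitv j l) := by
  have hD : Differentiable ℝ (fderiv ℝ V) :=
    (hV.fderiv_right (m := 1) (by norm_num)).differentiable (by norm_num)
  have hpd : (fun g' => pd V j g' l) = fun g' => fderiv ℝ V g' (unitv j l) :=
    funext fun g' => pd_apply_eq_fderiv (hV.differentiable (by norm_num)) j g' l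
  change lineDeriv ℝ (fun g' => pd V j g' l) g (unitv i k) = _
  rw [hpd, ((hD g).clm_apply (differentiableAt_const _)).lineDeriv_eq_fderiv,
    fderiv_clm_apply (hD g) (differentiableAt_const _)]
  simp

lemma fderiv_fderiv_apply_eq_sum_bilin (hV : ContDiff ℝ 2 V) (j : Fin 6) (p h : Fin 6 → E2)
    (w : E2) :
    fderiv ℝ (fderiv ℝ V) p h (∑ l, w l • unitv j l) = ∑ i, bilin (pd2 V i j p) (h i) w := by
  simp only [map_sum, map_smul, smul_eq_mul, clm_apply_eq_sum_unitv (fderiv ℝ (fderiv ℝ V) p) h,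
    sum_apply, smul_apply, bilin, pd2_apply_eq_fderiv_fderiv hV, Finset.mul_sum]
  rw [Finset.sum_comm]
  refine Finset.sum_congr rfl fun i _ => ?_
  rw [Finset.sum_comm]
  refine Finset.sum_congr rfl fun k _ => Finset.sum_congr rfl fun l _ => ?_
  ring

lemma norm_pd_sub_le (hV : ContDiff ℝ 2 V) (j : Fin 6) {B : Fin 6 → ℝ}
    (hB : ∀ i g, matOpNorm (pd2 V i j g) ≤ B i) (g₀ g₁ : Fin 6 → E2) :
    ‖pd V j g₁ - pd V j g₀‖ ≤ ∑ i, B i * ‖g₁ i - g₀ i‖ := by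
  have hD : Differentiable ℝ (fderiv ℝ V) :=
    (hV.fderiv_right (m := 1) (by norm_num)).differentiable (by norm_num)
  refine norm_le_of_forall_unit_inner_le fun w hw => ?_
  set h := g₁ - g₀
  -- `u` is `w` placed in slot `j`, so that `DV(g) u = ⟪w, ∂_j V(g)⟫`.
  set u : Fin 6 → E2 := ∑ l, w l • unitv j l
  have hψ : ∀ g, fderiv ℝ V g u = inner ℝ w (pd V j g) := fun g => by
    simp [u, pd_apply_eq_fderiv (hV.differentiable (by norm_num)), PiLp.inner_apply,
      Fin.sum_univ_two, mul_comm]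
  have hderiv : ∀ t : ℝ, HasDerivAt (fun s : ℝ => fderiv ℝ V (g₀ + s • h) u)
      (fderiv ℝ (fderiv ℝ V) (g₀ + t • h) h u) t := fun t => by
    have hd := (hD (g₀ + t • h)).clm_apply (differentiableAt_const u)
    simpa [fderiv_clm_apply (hD _) (differentiableAt_const u)] using
      hasDerivAt_comp_add_smul hd
  obtain ⟨c, -, hc⟩ := exists_hasDerivAt_eq_slope _ _ zero_lt_one
    (continuous_iff_continuousAt.2 fun t => (hderiv t).continuousAt).continuousOn
    fun t _ => hderiv t
  calc inner ℝ w (pd V j g₁ - pd V j g₀)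
      = fderiv ℝ (fderiv ℝ V) (g₀ + c • h) h u := by
        rw [hc, inner_sub_right, ← hψ, ← hψ]
        simp [h]
    _ = ∑ i, bilin (pd2 V i j (g₀ + c • h)) (h i) w :=
        fderiv_fderiv_apply_eq_sum_bilin hV j _ h w
    _ ≤ ∑ i, B i * ‖g₁ i - g₀ i‖ := Finset.sum_le_sum fun i _ => by
        refine (bilin_le _ _ _).trans ?_
        rw [hw, mul_one]
        exact mul_le_mul_of_nonneg_right (hB i _) (norm_nonneg _)

end Potential

lemma outer_sub (v u w : E2) : outer (v - u) w = outer v w - outer u w := by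
  funext p q
  simp only [outer, PiLp.sub_apply, Matrix.sub_apply]
  ring

lemma frobN_outer (v w : E2) : frobN (outer v w) = ‖v‖ * ‖w‖ := by
  rw [frobN, EuclideanSpace.norm_eq, EuclideanSpace.norm_eq, ← Real.sqrt_mul (by positivity)]
  congr 1
  simp only [outer, Real.norm_eq_abs, sq_abs, Fin.sum_univ_two]
  ring

section Frobenius

attribute [local instance] Matrix.frobeniusSeminormedAddCommGroup Matrix.frobeniusNormedSpace

lemma frobN_eq_norm (A : Mat2) : frobN A = ‖A‖ := by
  simp [frobN, Matrix.frobenius_norm_def, Real.sqrt_eq_rpow]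

lemma frobN_smul_sum_outer_le {ι : Type*} [Fintype ι] {c : ℝ} (hc : 0 ≤ c) (v w : ι → E2) :
    frobN (c • ∑ j, outer (v j) (w j)) ≤ c * ∑ j, ‖v j‖ * ‖w j‖ := by
  rw [frobN_eq_norm, norm_smul, Real.norm_of_nonneg hc]
  gcongr
  refine (norm_sum_le _ _).trans_eq (Finset.sum_congr rfl fun j _ => ?_)
  rw [← frobN_eq_norm, frobN_outer]

end Frobenius

end AC

open AC in
theorem atomistic_stress_lipschitz_general
    (V : (Fin 6 → E2) → ℝ) (hV : memV V) (hM2 : M2fin V)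
    (y : ℤ × ℤ → E2) (T : Tri) :
    frobN (Sa V y T - Sa V (yhom (triGrad y T)) T) ≤
      Om0⁻¹ * M2 V * ⨆ n ∈ triVerts T, D2n y n := by
  have hΩ : 0 ≤ Om0⁻¹ := inv_nonneg.2 (by unfold Om0; positivity)
  set F := triGrad y T
  set K := ⨆ n ∈ triVerts T, D2n y n
  set S : Fin 6 → Fin 6 → ℝ := fun i j => ⨆ g, matOpNorm (pd2 V i j g)
  have hS : ∀ i j, 0 ≤ S i j := fun i j => (matOpNorm_nonneg _).trans (le_ciSup (hM2 i j) 0)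
  have hdiff : Sa V y T - Sa V (yhom F) T =
      Om0⁻¹ • ∑ j, outer (pd V j (Dfam y (xT T j)) - pd V j (Famat F)) (aFam j) := by
    simp only [Sa, dfam_yhom, ← smul_sub, ← Finset.sum_sub_distrib, outer_sub]
  have hpd : ∀ j, ‖pd V j (Dfam y (xT T j)) - pd V j (Famat F)‖ ≤ ∑ i, S i j * K := fun j =>
    (norm_pd_sub_le (hV.1.of_le (by norm_num)) j (fun i g => le_ciSup (hM2 i j) g) _ _).trans <|
      Finset.sum_le_sum fun i _ =>
        mul_le_mul_of_nonneg_left (norm_dfam_sub_famat_triGrad_le y T i j) (hS i j)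
  calc frobN (Sa V y T - Sa V (yhom F) T)
      ≤ Om0⁻¹ * ∑ j, ‖pd V j (Dfam y (xT T j)) - pd V j (Famat F)‖ * ‖aFam j‖ := by
        rw [hdiff]
        exact frobN_smul_sum_outer_le hΩ _ _
    _ ≤ Om0⁻¹ * ∑ j, ∑ i, S i j * K := by
        refine mul_le_mul_of_nonneg_left (Finset.sum_le_sum fun j _ => ?_) hΩ
        rw [show ‖aFam j‖ = 1 from norm_avec _, mul_one]
        exact hpd j
    _ = Om0⁻¹ * M2 V * K := by
        rw [M2, Finset.sum_comm, mul_assoc, Finset.sum_mul]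
        simp only [Finset.sum_mul, S]

open AC in
/-- Lipschitz estimate (5.19) for the atomistic stress. -/
theorem atomistic_stress_lipschitz
    (V : (Fin 6 → E2) → ℝ) (hV : memV V) (hM2 : M2fin V)
    (y : ℤ × ℤ → E2) (hy : inY0 y) (T : Tri) :
    frobN (Sa V y T - Sa V (yhom (triGrad y T)) T) ≤
      Om0⁻¹ * M2 V * ⨆ n ∈ triVerts T, D2n y n :=
  atomistic_stress_lipschitz_general V hV hM2 y T
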